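/- arXiv:0810.1705 — 2 statements merged into one kernel-verified Lean document; each statement's English description precedes it below -/
import Mathlib

section
/- With M^{(N)}_{k,r} = I_r − N^{-1} B^{(N)}_{k,r} as above and 0 ≤ k, r ≤ N−1, the matrix M^{(N)}_{k,r} is positive definite if and only if k + r < N. -/
open Real

/-- Chebyshev polynomial of the second kind, evaluated at a real number. -/
noncomputable def chebU (k : ℕ) (x : ℝ) : ℝ := (Polynomial.Chebyshev.U ℝ (k : ℤ)).eval x

/-- The matrix `B^{(N)}_{k,r}` with entries `U_k(cos(φ_μ - φ_ν))`, `φ_ν = 2πν/N`. -/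
noncomputable def Bmat (N k r : ℕ) : Matrix (Fin r) (Fin r) ℝ :=
  fun μ ν => chebU k (Real.cos (2 * π * ((μ : ℝ) - (ν : ℝ)) / N))

/-- The matrix `M^{(N)}_{k,r} = I_r - N⁻¹ B^{(N)}_{k,r}`. -/
noncomputable def Mmat (N k r : ℕ) : Matrix (Fin r) (Fin r) ℝ :=
  1 - (N : ℝ)⁻¹ • Bmat N k r

/-!
Write `x̂(a) = ∑_μ x_μ e^{2πiaμ/N}` for `a ∈ ℤ/N`. The identity
`U_k(cos t) = ∑_{j ≤ k} cos((k - 2j)t)` gives `xᵀBx = ∑_{j ≤ k} |x̂(k - 2j)|²`, and Parseval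
(`r ≤ N`) gives `N‖x‖² = ∑_a |x̂(a)|²`. Hence `N·xᵀMx` is the energy of `x̂` off the frequencies
`k - 2j`; when these `k + 1` frequencies are distinct (`N` odd or `2k < N`), that is the energy on
`N - 1 - k` frequencies. Otherwise, if `2r ≤ N`, Parseval along the progression `k - 2j`, `j < N`,
shows that `N·xᵀMx` is the energy on the `N - 1 - k` distinct frequencies `k - 2j`, `k < j < N`.
In both cases `M` is positive definite iff `r ≤ N - 1 - k`: `x̂` cannot vanish at `r` distinct
frequencies (Vandermonde), whereas a set of fewer than `r` frequencies closed under negation is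
annihilated by some real `x ≠ 0`. In the remaining case (`N` even, `2k ≥ N`, `2r > N`) the
frequencies `k - 2j` cover at least `N / 2` residues, so some real `x ≠ 0` annihilates the others
and has `xᵀMx ≤ 0`.
-/

open Finset Matrix

lemma chebU_add_two (k : ℕ) (x : ℝ) :
    chebU (k + 2) x = 2 * x * chebU (k + 1) x - chebU k x := by
  simp only [chebU, Nat.cast_add, Nat.cast_ofNat, Nat.cast_one, Polynomial.Chebyshev.U_add_two,
    Polynomial.eval_sub, Polynomial.eval_mul, Polynomial.eval_X, Polynomial.eval_ofNat]

lemma chebU_cos : ∀ (k : ℕ) (t : ℝ),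
    chebU k (cos t) = ∑ j ∈ range (k + 1), cos ((k - 2 * j : ℝ) * t)
  | 0, t => by simp [chebU]
  | 1, t => by norm_num [chebU, sum_range_succ]; ring
  | k + 2, t => by
    have key (j : ℕ) : 2 * cos t * cos ((k + 1 - 2 * j : ℝ) * t) =
        cos ((k + 2 - 2 * j : ℝ) * t) + cos ((k - 2 * j : ℝ) * t) := by
      rw [cos_add_cos]; ring_nf
    rw [chebU_add_two, chebU_cos (k + 1), chebU_cos k, mul_sum]
    push_cast
    simp only [key, sum_add_distrib]
    rw [sum_range_succ _ (k + 2), sum_range_succ (fun j : ℕ => cos ((k - 2 * j : ℝ) * t)) (k + 1)]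
    have : cos ((k + 2 - 2 * (k + 2 : ℕ) : ℝ) * t) = cos ((k - 2 * (k + 1 : ℕ) : ℝ) * t) := by
      push_cast; ring_nf
    linarith

/-- The frequencies `L - 1 - 2j`, `j < L`, of `U_{L-1}(cos t)`, read modulo `N`. Indexing by
`L = k + 1` lets the complementary family `N - L` be empty. -/
def chebFreq (N L j : ℕ) : ZMod N := L - 1 - 2 * j

def chebFreqs (N L : ℕ) : Finset (ZMod N) := (range L).image (chebFreq N L)

section Frequencies

variable {N : ℕ}

lemma neg_chebFreq {L j : ℕ} (hj : j < L) : -chebFreq N L j = chebFreq N L (L - 1 - j) := by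
  simp only [chebFreq]
  rw [Nat.cast_sub (by omega), Nat.cast_sub (by omega)]
  push_cast; ring

lemma neg_mem_chebFreqs {L : ℕ} {a : ZMod N} (ha : a ∈ chebFreqs N L) : -a ∈ chebFreqs N L := by
  obtain ⟨j, hj, rfl⟩ := mem_image.1 ha
  rw [mem_range] at hj
  rw [neg_chebFreq hj]
  exact mem_image_of_mem _ (mem_range.2 (by omega))

lemma neg_mem_compl_chebFreqs [NeZero N] {L : ℕ} {a : ZMod N} (ha : a ∈ (chebFreqs N L)ᶜ) :
    -a ∈ (chebFreqs N L)ᶜ := by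
  rw [mem_compl] at ha ⊢
  exact fun h => ha (neg_neg a ▸ neg_mem_chebFreqs h)

lemma Fin.eq_of_natCast_sub_eq_zero {r : ℕ} (hr : r ≤ N) {μ ν : Fin r}
    (h : ((μ : ℕ) : ZMod N) - ((ν : ℕ) : ZMod N) = 0) : μ = ν := by
  rw [sub_eq_zero, ZMod.natCast_eq_natCast_iff', Nat.mod_eq_of_lt (by omega),
    Nat.mod_eq_of_lt (by omega)] at h
  exact Fin.ext h

lemma eq_of_two_mul_natCast_eq {M i j : ℕ} (hM : M ≤ N) (h : Odd N ∨ 2 * M ≤ N + 1)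
    (hi : i < M) (hj : j < M) (hij : 2 * (i : ZMod N) = 2 * j) : i = j := by
  rw [← Nat.cast_ofNat, ← Nat.cast_mul, ← Nat.cast_mul, ZMod.natCast_eq_natCast_iff] at hij
  rcases h with hodd | hsmall
  · exact (hij.cancel_left_of_coprime (Nat.coprime_two_right.2 hodd)).eq_of_lt_of_lt
      (by omega) (by omega)
  · have := hij.eq_of_lt_of_lt (by omega) (by omega)
    omega

lemma chebFreq_injOn {L M : ℕ} (hM : M ≤ N) (h : Odd N ∨ 2 * M ≤ N + 1) :
    Set.InjOn (chebFreq N L) (range M) := by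
  intro i hi j hj hij
  simp only [coe_range, Set.mem_Iio] at hi hj
  exact eq_of_two_mul_natCast_eq hM h hi hj (by simpa [chebFreq] using hij)

lemma card_chebFreqs {L : ℕ} (hL : L ≤ N) (h : Odd N ∨ 2 * L ≤ N + 1) :
    #(chebFreqs N L) = L := by
  rw [chebFreqs, card_image_of_injOn (chebFreq_injOn hL h), card_range]

end Frequencies

/-- The first `r` columns `e^{2πi aμ/N}` of the discrete Fourier transform on `ℤ/N`. -/
noncomputable def fourierMatrix (N r : ℕ) [NeZero N] : Matrix (ZMod N) (Fin r) ℂ :=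
  Matrix.of fun a μ => ZMod.stdAddChar (a * ((μ : ℕ) : ZMod N))

noncomputable def fourierSum (N : ℕ) [NeZero N] {r : ℕ} (x : Fin r → ℝ) : ZMod N → ℂ :=
  fourierMatrix N r *ᵥ (Complex.ofReal ∘ x)

section Fourier

variable {N r : ℕ} [NeZero N]

lemma sum_range_natCast {M : Type*} [AddCommMonoid M] (f : ZMod N → M) :
    ∑ j ∈ range N, f j = ∑ a, f a :=
  sum_nbij' (↑) ZMod.val (by simp) (by simp [ZMod.val_lt])
    (fun j hj => ZMod.val_natCast_of_lt (mem_range.1 hj)) (fun a _ => ZMod.natCast_zmod_val a)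
    (fun _ _ => rfl)

lemma fourierSum_apply (x : Fin r → ℝ) (a : ZMod N) :
    fourierSum N x a = ∑ μ : Fin r, ZMod.stdAddChar (a * ((μ : ℕ) : ZMod N)) * x μ := rfl

lemma normSq_fourierSum (x : Fin r → ℝ) (a : ZMod N) :
    (Complex.normSq (fourierSum N x a) : ℂ) =
      ∑ μ, ∑ ν, x μ * x ν * ZMod.stdAddChar (a * (((μ : ℕ) : ZMod N) - ((ν : ℕ) : ZMod N))) := by
  rw [← Complex.mul_conj, fourierSum_apply, map_sum, sum_mul_sum]
  refine sum_congr rfl fun μ _ => sum_congr rfl fun ν _ => ?_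
  rw [map_mul (starRingEnd ℂ), Complex.conj_ofReal, ← AddChar.map_neg_eq_conj, mul_sub,
    sub_eq_add_neg, AddChar.map_add_eq_mul]
  ring

lemma sum_normSq_fourierSum_affine (x : Fin r → ℝ) (s c : ZMod N)
    (hc : ∀ μ ν : Fin r, c * (((μ : ℕ) : ZMod N) - ((ν : ℕ) : ZMod N)) = 0 → μ = ν) :
    ∑ a, Complex.normSq (fourierSum N x (s + c * a)) = N * ∑ μ, x μ ^ 2 := by
  have hchar (μ ν : Fin r) :
      ∑ a : ZMod N, ZMod.stdAddChar ((s + c * a) * (((μ : ℕ) : ZMod N) - ((ν : ℕ) : ZMod N))) =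
        if μ = ν then (N : ℂ) else 0 := by
    classical
    simp_rw [add_mul, AddChar.map_add_eq_mul, ← mul_sum, mul_assoc, mul_left_comm c,
      AddChar.sum_mulShift _ (ZMod.isPrimitive_stdAddChar N), ZMod.card]
    by_cases hμν : μ = ν
    · simp [hμν]
    · simpa [hμν] using fun h => absurd (hc μ ν h) hμν
  apply Complex.ofReal_injective
  push_cast
  simp_rw [normSq_fourierSum, mul_sum]
  rw [sum_comm]
  refine sum_congr rfl fun μ _ => ?_
  rw [sum_comm]
  simp_rw [← mul_sum, hchar]
  simp [sq, mul_comm]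

lemma sum_normSq_fourierSum (hr : r ≤ N) (x : Fin r → ℝ) :
    ∑ a, Complex.normSq (fourierSum N x a) = N * ∑ μ, x μ ^ 2 := by
  simpa only [zero_add, one_mul] using sum_normSq_fourierSum_affine (N := N) x 0 1
    fun μ ν h => Fin.eq_of_natCast_sub_eq_zero hr (by rwa [one_mul] at h)

/-- The frequencies of `U_{L-1}` and of `U_{N-L-1}` together run once through the
progression `L - 1 - 2j`, `j < N`. -/
lemma sum_normSq_chebFreq_add (x : Fin r → ℝ) {L : ℕ} (hL : L ≤ N)
    (h2 : ∀ μ ν : Fin r, 2 * (((μ : ℕ) : ZMod N) - ((ν : ℕ) : ZMod N)) = 0 → μ = ν) :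
    ∑ j ∈ range L, Complex.normSq (fourierSum N x (chebFreq N L j)) +
      ∑ j ∈ range (N - L), Complex.normSq (fourierSum N x (chebFreq N (N - L) j)) =
      N * ∑ μ, x μ ^ 2 := by
  rw [← sum_normSq_fourierSum_affine x ((L : ZMod N) - 1) (-2) (by simpa [neg_mul] using h2),
    ← sum_range_natCast, show range N = range (L + (N - L)) by rw [Nat.add_sub_cancel' hL],
    sum_range_add]
  congr 1 <;> refine sum_congr rfl fun j _ => ?_ <;> congr 2
  · simp [chebFreq]; ring
  · simp [chebFreq, Nat.cast_sub hL]; ring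

lemma eq_zero_of_fourierSum_eq_zero {x : Fin r → ℝ} {S : Finset (ZMod N)} (hS : r ≤ #S)
    (hx : ∀ a ∈ S, fourierSum N x a = 0) : x = 0 := by
  obtain ⟨T, hTS, hT⟩ := exists_subset_card_eq hS
  let e : Fin r ≃ T := (T.equivFin.trans (finCongr hT)).symm
  let v : Fin r → ℂ := fun μ => ZMod.stdAddChar (e μ : ZMod N)
  have hv : Function.Injective v :=
    ZMod.injective_stdAddChar.comp (Subtype.val_injective.comp e.injective)
  have hVx : vandermonde v *ᵥ (Complex.ofReal ∘ x) = 0 := by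
    ext μ
    rw [Pi.zero_apply, ← hx _ (hTS (e μ).2), fourierSum, mulVec, mulVec]
    refine sum_congr rfl fun ν _ => ?_
    simp [v, fourierMatrix, ← AddChar.map_nsmul_eq_pow, mul_comm]
  funext μ
  simpa using congrFun (eq_zero_of_mulVec_eq_zero (det_vandermonde_ne_zero_iff.2 hv) hVx) μ

lemma fourierMatrix_mulVec_star (z : Fin r → ℂ) (a : ZMod N) :
    (fourierMatrix N r *ᵥ star z) a = star ((fourierMatrix N r *ᵥ z) (-a)) := by
  simp only [mulVec, dotProduct, fourierMatrix, of_apply, star_sum, star_mul', neg_mul,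
    AddChar.map_neg_eq_conj, Pi.star_apply]
  simp [mul_comm]

/-- The real and imaginary parts of a complex solution are real solutions, because the set of
frequencies is closed under negation. -/
lemma exists_ne_zero_fourierSum_eq_zero {S : Finset (ZMod N)} (hS : #S < r)
    (hneg : ∀ a ∈ S, -a ∈ S) : ∃ x : Fin r → ℝ, x ≠ 0 ∧ ∀ a ∈ S, fourierSum N x a = 0 := by
  let A : Matrix S (Fin r) ℂ := (fourierMatrix N r).submatrix (↑) id
  obtain ⟨z, hz, hz0⟩ := Submodule.exists_mem_ne_zero_of_ne_bot
    (LinearMap.ker_ne_bot_of_finrank_lt (f := A.mulVecLin) (by simpa using hS))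
  have hzS (a : ZMod N) (ha : a ∈ S) : (fourierMatrix N r *ᵥ z) a = 0 :=
    congrFun (LinearMap.mem_ker.1 hz) ⟨a, ha⟩
  have hstarS (a : ZMod N) (ha : a ∈ S) : (fourierMatrix N r *ᵥ star z) a = 0 := by
    rw [fourierMatrix_mulVec_star, hzS _ (hneg a ha), star_zero]
  have hre : Complex.ofReal ∘ (fun μ => (z μ).re) = (2 : ℂ)⁻¹ • (z + star z) := by
    ext μ; simp [Complex.re_eq_add_conj, div_eq_inv_mul]
  have him : Complex.ofReal ∘ (fun μ => (z μ).im) = (2 * Complex.I)⁻¹ • (z - star z) := by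
    ext μ; simp [Complex.im_eq_sub_conj, div_eq_inv_mul]
  by_cases h : (fun μ => (z μ).re) = 0
  · refine ⟨fun μ => (z μ).im, fun h' => hz0 (funext fun μ => Complex.ext ?_ ?_), fun a ha => ?_⟩
    · exact congrFun h μ
    · exact congrFun h' μ
    · rw [fourierSum, him, mulVec_smul, mulVec_sub, Pi.smul_apply, Pi.sub_apply, hzS a ha,
        hstarS a ha, sub_zero, smul_zero]
  · refine ⟨_, h, fun a ha => ?_⟩
    rw [fourierSum, hre, mulVec_smul, mulVec_add, Pi.smul_apply, Pi.add_apply, hzS a ha,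
      hstarS a ha, add_zero, smul_zero]

lemma posDef_of_sum_normSq_le {A : Matrix (Fin r) (Fin r) ℝ} (hA : A.IsHermitian)
    {S : Finset (ZMod N)} (hS : r ≤ #S)
    (h : ∀ x, ∑ a ∈ S, Complex.normSq (fourierSum N x a) ≤ N * (x ⬝ᵥ A *ᵥ x)) : A.PosDef := by
  refine posDef_iff_dotProduct_mulVec.2 ⟨hA, fun x hx => ?_⟩
  obtain ⟨a, ha, hxa⟩ : ∃ a ∈ S, fourierSum N x a ≠ 0 := by
    by_contra! h0
    exact hx (eq_zero_of_fourierSum_eq_zero hS h0)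
  have hpos : 0 < ∑ a ∈ S, Complex.normSq (fourierSum N x a) :=
    sum_pos' (fun _ _ => Complex.normSq_nonneg _) ⟨a, ha, Complex.normSq_pos.2 hxa⟩
  rw [star_trivial]
  exact pos_of_mul_pos_right (hpos.trans_le (h x)) (Nat.cast_nonneg N)

lemma not_posDef_of_le_sum_normSq {A : Matrix (Fin r) (Fin r) ℝ} {S : Finset (ZMod N)}
    (hS : #S < r) (hneg : ∀ a ∈ S, -a ∈ S)
    (h : ∀ x, N * (x ⬝ᵥ A *ᵥ x) ≤ ∑ a ∈ S, Complex.normSq (fourierSum N x a)) : ¬A.PosDef := by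
  intro hA
  obtain ⟨x, hx, hxS⟩ := exists_ne_zero_fourierSum_eq_zero hS hneg
  have hQ := (posDef_iff_dotProduct_mulVec.1 hA).2 hx
  rw [star_trivial] at hQ
  have hle := h x
  rw [sum_eq_zero fun a ha => by rw [hxS a ha, map_zero]] at hle
  exact hle.not_gt (mul_pos (Nat.cast_pos.2 (NeZero.pos N)) hQ)

lemma posDef_iff_of_eq_sum_normSq {A : Matrix (Fin r) (Fin r) ℝ} (hA : A.IsHermitian)
    {S : Finset (ZMod N)} (hneg : ∀ a ∈ S, -a ∈ S)
    (h : ∀ x, N * (x ⬝ᵥ A *ᵥ x) = ∑ a ∈ S, Complex.normSq (fourierSum N x a)) :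
    A.PosDef ↔ r ≤ #S :=
  ⟨fun hA' => not_lt.1 fun hS => not_posDef_of_le_sum_normSq hS hneg (fun x => (h x).le) hA',
    fun hS => posDef_of_sum_normSq_le hA hS fun x => (h x).ge⟩

end Fourier

lemma Bmat_isHermitian (N k r : ℕ) : (Bmat N k r).IsHermitian :=
  IsHermitian.ext fun μ ν => by
    rw [star_trivial, Bmat, Bmat, ← cos_neg]
    ring_nf

lemma Mmat_isHermitian (N k r : ℕ) : (Mmat N k r).IsHermitian :=
  isHermitian_one.sub ((Bmat_isHermitian N k r).smul (IsSelfAdjoint.all _))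

section QuadraticForm

variable {N r : ℕ} [NeZero N]

lemma re_stdAddChar_intCast (n : ℤ) :
    (ZMod.stdAddChar (n : ZMod N)).re = cos (2 * π * n / N) := by
  rw [ZMod.stdAddChar_coe, ← Complex.exp_ofReal_mul_I_re]
  push_cast
  ring_nf

lemma Bmat_apply_eq_sum (k : ℕ) (μ ν : Fin r) :
    Bmat N k r μ ν = ∑ j ∈ range (k + 1),
      (ZMod.stdAddChar (chebFreq N (k + 1) j * (((μ : ℕ) : ZMod N) - ((ν : ℕ) : ZMod N)))).re := by
  rw [Bmat, chebU_cos]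
  refine sum_congr rfl fun j _ => ?_
  have : chebFreq N (k + 1) j * (((μ : ℕ) : ZMod N) - ((ν : ℕ) : ZMod N)) =
      (((k - 2 * j) * ((μ : ℕ) - (ν : ℕ)) : ℤ) : ZMod N) := by
    push_cast [chebFreq]; ring
  rw [this, re_stdAddChar_intCast]
  push_cast
  ring_nf

lemma normSq_fourierSum_eq_sum_re (x : Fin r → ℝ) (a : ZMod N) :
    Complex.normSq (fourierSum N x a) = ∑ μ, ∑ ν,
      x μ * x ν * (ZMod.stdAddChar (a * (((μ : ℕ) : ZMod N) - ((ν : ℕ) : ZMod N)))).re := by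
  simpa [Complex.re_sum] using congrArg Complex.re (normSq_fourierSum x a)

lemma dotProduct_Bmat (k : ℕ) (x : Fin r → ℝ) :
    x ⬝ᵥ (Bmat N k r *ᵥ x) =
      ∑ j ∈ range (k + 1), Complex.normSq (fourierSum N x (chebFreq N (k + 1) j)) := by
  simp_rw [normSq_fourierSum_eq_sum_re, dotProduct, mulVec, dotProduct, Bmat_apply_eq_sum,
    sum_mul, mul_sum]
  conv_rhs => rw [sum_comm]; enter [2, μ]; rw [sum_comm]
  refine sum_congr rfl fun μ _ => sum_congr rfl fun ν _ => sum_congr rfl fun j _ => ?_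
  ring

lemma dotProduct_Mmat (k : ℕ) (x : Fin r → ℝ) :
    N * (x ⬝ᵥ (Mmat N k r *ᵥ x)) = N * ∑ μ, x μ ^ 2 -
      ∑ j ∈ range (k + 1), Complex.normSq (fourierSum N x (chebFreq N (k + 1) j)) := by
  have hN : (N : ℝ) ≠ 0 := NeZero.ne _
  rw [Mmat, sub_mulVec, one_mulVec, smul_mulVec, dotProduct_sub, dotProduct_smul,
    dotProduct_Bmat, smul_eq_mul, mul_sub, ← mul_assoc, mul_inv_cancel₀ hN, one_mul]
  simp only [dotProduct, sq]

lemma mul_dotProduct_Mmat_add (k : ℕ) (hr : r ≤ N) (x : Fin r → ℝ) :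
    N * (x ⬝ᵥ (Mmat N k r *ᵥ x)) +
      ∑ j ∈ range (k + 1), Complex.normSq (fourierSum N x (chebFreq N (k + 1) j)) =
      ∑ a ∈ (chebFreqs N (k + 1))ᶜ, Complex.normSq (fourierSum N x a) +
      ∑ a ∈ chebFreqs N (k + 1), Complex.normSq (fourierSum N x a) := by
  rw [sum_compl_add_sum, sum_normSq_fourierSum hr, dotProduct_Mmat, sub_add_cancel]

lemma mul_dotProduct_Mmat_le_sum_compl (k : ℕ) (hr : r ≤ N) (x : Fin r → ℝ) :
    N * (x ⬝ᵥ (Mmat N k r *ᵥ x)) ≤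
      ∑ a ∈ (chebFreqs N (k + 1))ᶜ, Complex.normSq (fourierSum N x a) := by
  have := mul_dotProduct_Mmat_add k hr x
  have := sum_image_le_of_nonneg (s := range (k + 1)) (g := chebFreq N (k + 1))
    (f := fun a => Complex.normSq (fourierSum N x a)) fun _ _ => Complex.normSq_nonneg _
  rw [← chebFreqs] at this
  linarith

lemma mul_dotProduct_Mmat_eq_sum_compl {k : ℕ} (hr : r ≤ N) (hk : k + 1 ≤ N)
    (hinj : Odd N ∨ 2 * (k + 1) ≤ N + 1) (x : Fin r → ℝ) :
    N * (x ⬝ᵥ (Mmat N k r *ᵥ x)) =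
      ∑ a ∈ (chebFreqs N (k + 1))ᶜ, Complex.normSq (fourierSum N x a) := by
  have := mul_dotProduct_Mmat_add k hr x
  rw [chebFreqs, sum_image (chebFreq_injOn hk hinj), ← chebFreqs] at this
  linarith

lemma mul_dotProduct_Mmat_eq_sum_chebFreqs {k : ℕ} (hk : k + 1 ≤ N)
    (h2 : ∀ μ ν : Fin r, 2 * (((μ : ℕ) : ZMod N) - ((ν : ℕ) : ZMod N)) = 0 → μ = ν)
    (hinj : Odd N ∨ 2 * (N - (k + 1)) ≤ N + 1) (x : Fin r → ℝ) :
    N * (x ⬝ᵥ (Mmat N k r *ᵥ x)) =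
      ∑ a ∈ chebFreqs N (N - (k + 1)), Complex.normSq (fourierSum N x a) := by
  rw [chebFreqs, sum_image (chebFreq_injOn (by omega) hinj), dotProduct_Mmat,
    ← sum_normSq_chebFreq_add x hk h2, add_sub_cancel_left]

end QuadraticForm

theorem Mmat_posDef_iff (N k r : ℕ) (hN : 1 ≤ N) (hk : k ≤ N - 1) (hr : r ≤ N - 1) :
    (Mmat N k r).PosDef ↔ k + r < N := by
  have : NeZero N := ⟨by omega⟩
  have hkN : k + 1 ≤ N := by omega
  have hrN : r ≤ N := by omega
  by_cases hinj : Odd N ∨ 2 * (k + 1) ≤ N + 1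
  · rw [posDef_iff_of_eq_sum_normSq (Mmat_isHermitian N k r) (fun _ => neg_mem_compl_chebFreqs)
      (mul_dotProduct_Mmat_eq_sum_compl hrN hkN hinj), card_compl, ZMod.card,
      card_chebFreqs hkN hinj]
    omega
  obtain ⟨hNeven, hk2⟩ : Even N ∧ N + 1 < 2 * (k + 1) := by
    simpa [Nat.not_odd_iff_even] using hinj
  rw [Nat.even_iff] at hNeven
  by_cases h2r : 2 * r ≤ N
  · have h2 (μ ν : Fin r) (h : 2 * (((μ : ℕ) : ZMod N) - ((ν : ℕ) : ZMod N)) = 0) : μ = ν :=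
      Fin.ext (eq_of_two_mul_natCast_eq hrN (Or.inr (by omega)) μ.2 ν.2
        (by rwa [mul_sub, sub_eq_zero] at h))
    have hinj' : Odd N ∨ 2 * (N - (k + 1)) ≤ N + 1 := Or.inr (by omega)
    rw [posDef_iff_of_eq_sum_normSq (Mmat_isHermitian N k r) (fun _ => neg_mem_chebFreqs)
      (mul_dotProduct_Mmat_eq_sum_chebFreqs hkN h2 hinj'), card_chebFreqs (by omega) hinj']
    omega
  · have hcard : N / 2 ≤ #(chebFreqs N (k + 1)) := by
      rw [← card_range (N / 2), ← card_image_of_injOn (s := range (N / 2))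
        (chebFreq_injOn (N := N) (L := k + 1) (M := N / 2) (by omega) (Or.inr (by omega)))]
      exact card_le_card (image_subset_image (range_subset_range.2 (by omega)))
    refine iff_of_false (not_posDef_of_le_sum_normSq ?_ (fun _ => neg_mem_compl_chebFreqs)
      (mul_dotProduct_Mmat_le_sum_compl k hrN)) (by omega)
    rw [card_compl, ZMod.card]
    omega
end

section
/- For each k ≥ 0 and each t ∈ (−1,1), θ ∈ [0,2π], if P is an orthogonal polynomial of degree k on the unit disk B (with respect to Lebesgue measure), then R P(θ, t) = (2/(k+1)) √(1−t²) U_k(t) P(cos θ, sin θ). -/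
open Real

/-- Radon transform of `f` over the chord of the unit disk
`{(x,y) : x cos θ + y sin θ = t}`, parametrized by arclength. -/
noncomputable def radon (f : ℝ × ℝ → ℝ) (θ t : ℝ) : ℝ :=
  ∫ s in Set.Ioo (-Real.sqrt (1 - t ^ 2)) (Real.sqrt (1 - t ^ 2)),
    f (t * Real.cos θ - s * Real.sin θ, t * Real.sin θ + s * Real.cos θ)

/-- Evaluation of a bivariate polynomial at a point of the plane. -/
noncomputable def evalPoly (P : MvPolynomial (Fin 2) ℝ) (p : ℝ × ℝ) : ℝ :=
  MvPolynomial.eval ![p.1, p.2] P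

/-!
Rotating by `θ` turns `R P(θ, t)` into the integral of `G = P ∘ R_θ` over the vertical chord
`{t} × [-√(1 - t²), √(1 - t²)]`. Integrating monomials, this equals `√(1 - t²) q(t)` for a
polynomial `q` of degree `≤ k` with `q(1) = 2 P(cos θ, sin θ)`. Testing the orthogonality of `P`
against `x ↦ p(x₁ cos θ + x₂ sin θ)`, rotating the disk back and slicing it into vertical chords
shows that `q` is orthogonal to every polynomial of degree `< k` for the weight `√(1 - u²)` on
`[-1, 1]`. The `U_j` are orthogonal for this weight, so expanding `q` in `U_0, …, U_k` leaves only
`q = c U_k`, and `U_k(1) = k + 1` gives `c = 2 P(cos θ, sin θ) / (k + 1)`.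
-/

open MeasureTheory Polynomial

namespace Polynomial.Chebyshev

theorem integral_cos_intCast_mul_eq_zero {j : ℤ} (hj : j ≠ 0) :
    ∫ θ in 0..π, cos (j * θ) = 0 := by
  simpa [integral_measureT_eq_integral_cos, T_real_cos] using
    integral_eval_T_real_measureT_of_ne_zero hj

theorem integral_sin_mul_sin (m n : ℕ) :
    ∫ θ in 0..π, sin ((m + 1) * θ) * sin ((n + 1) * θ) = if m = n then π / 2 else 0 := by
  have product_to_sum : ∀ θ, sin ((m + 1) * θ) * sin ((n + 1) * θ) =
      (cos (((m - n : ℤ) : ℝ) * θ) - cos (((m + n + 2 : ℤ) : ℝ) * θ)) / 2 := by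
    intro θ
    rw [show (((m - n : ℤ) : ℝ) * θ) = (m + 1) * θ - (n + 1) * θ by push_cast; ring,
      show (((m + n + 2 : ℤ) : ℝ) * θ) = (m + 1) * θ + (n + 1) * θ by push_cast; ring,
      cos_sub, cos_add]
    ring
  simp_rw [product_to_sum]
  rw [intervalIntegral.integral_div, intervalIntegral.integral_sub
    (Continuous.intervalIntegrable (by fun_prop) _ _)
    (Continuous.intervalIntegrable (by fun_prop) _ _),
    integral_cos_intCast_mul_eq_zero (j := m + n + 2) (by omega)]
  split_ifs with hmn
  · simp [hmn]
  · rw [integral_cos_intCast_mul_eq_zero (by omega)]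
    simp

theorem integral_sqrt_one_sub_sq_mul_U_mul_U (m n : ℕ) :
    ∫ x in -1..1, √(1 - x ^ 2) * ((U ℝ m).eval x * (U ℝ n).eval x) =
      if m = n then π / 2 else 0 := calc
  _ = ∫ x, (1 - x ^ 2) * ((U ℝ m).eval x * (U ℝ n).eval x) ∂measureT := by
    rw [integral_measureT]
    congr 1 with x
    conv_lhs => rw [← Real.div_sqrt]
    rw [Real.sqrt_inv]
    ring
  _ = ∫ θ in 0..π, sin ((m + 1) * θ) * sin ((n + 1) * θ) := by
    rw [integral_measureT_eq_integral_cos]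
    congr 1 with θ
    have hm := U_real_cos θ m
    have hn := U_real_cos θ n
    push_cast at hm hn
    rw [← hm, ← hn, ← sin_sq]
    ring
  _ = _ := integral_sin_mul_sin m n

noncomputable def sequenceU (R : Type*) [CommRing R] [IsDomain R] [NeZero (2 : R)] :
    Polynomial.Sequence R where
  elems' n := U R n
  degree_eq' n := degree_U_natCast R n

@[simp]
theorem sequenceU_apply (R : Type*) [CommRing R] [IsDomain R] [NeZero (2 : R)] (n : ℕ) :
    sequenceU R n = U R n :=
  rfl

theorem exists_eq_smul_U_of_integral_mul_U_eq_zero {k : ℕ} {q : ℝ[X]} (hq : q.natDegree ≤ k)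
    (horth : ∀ m < k, ∫ x in -1..1, √(1 - x ^ 2) * (q.eval x * (U ℝ m).eval x) = 0) :
    ∃ c : ℝ, q = c • U ℝ k := by
  have hspan : q ∈ Submodule.span ℝ (sequenceU ℝ '' Set.Iic k) := by
    rw [Sequence.span_degreeLE _ fun i _ => by simp]
    exact mem_degreeLE.2 (degree_le_of_natDegree_le hq)
  obtain ⟨l, hl, rfl⟩ := (Finsupp.mem_span_image_iff_linearCombination ℝ).1 hspan
  have hcoeff : ∀ m : ℕ, ∫ x in -1..1, √(1 - x ^ 2) *
      ((Finsupp.linearCombination ℝ (sequenceU ℝ) l).eval x * (U ℝ m).eval x) = l m * (π / 2) := by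
    intro m
    simp only [Finsupp.linearCombination_apply, Finsupp.sum, eval_finsetSum, eval_smul,
      smul_eq_mul, Finset.sum_mul, Finset.mul_sum]
    rw [intervalIntegral.integral_finsetSum fun i _ =>
      Continuous.intervalIntegrable (by fun_prop) _ _]
    have hterm : ∀ i, ∫ x in -1..1, √(1 - x ^ 2) * (l i * (sequenceU ℝ i).eval x * (U ℝ m).eval x) =
        l i * if i = m then π / 2 else 0 := by
      intro i
      rw [← integral_sqrt_one_sub_sq_mul_U_mul_U, ← intervalIntegral.integral_const_mul,
        sequenceU_apply]
      congr 1 with x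
      ring
    simp_rw [hterm, mul_ite, mul_zero, Finset.sum_ite_eq']
    split_ifs with hm
    · rfl
    · rw [Finsupp.notMem_support_iff.1 hm, zero_mul]
  refine ⟨l k, ?_⟩
  suffices l = Finsupp.single k (l k) by
    rw [this, Finsupp.linearCombination_single, Finsupp.single_eq_same]
    rfl
  ext m
  rcases lt_trichotomy m k with hm | rfl | hm
  · have hlm : l m * (π / 2) = 0 := (hcoeff m).symm.trans (horth m hm)
    rw [Finsupp.single_eq_of_ne hm.ne, (mul_eq_zero.1 hlm).resolve_right (by positivity)]
  · simp
  · rw [Finsupp.single_eq_of_ne hm.ne']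
    exact Finsupp.notMem_support_iff.1 fun hmem => hm.not_ge (hl hmem)

end Polynomial.Chebyshev

namespace MvPolynomial

variable {σ τ R : Type*} [CommSemiring R]

theorem totalDegree_bind₁_le {f : σ → MvPolynomial τ R} {n : ℕ} (hf : ∀ i, (f i).totalDegree ≤ n)
    (p : MvPolynomial σ R) : (bind₁ f p).totalDegree ≤ p.totalDegree * n := by
  conv_lhs => rw [p.as_sum, map_sum]
  refine (totalDegree_finsetSum _ _).trans (Finset.sup_le fun d hd => ?_)
  rw [bind₁_monomial]
  refine (totalDegree_mul _ _).trans ?_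
  rw [totalDegree_C, zero_add]
  refine (totalDegree_finsetProd _ _).trans ?_
  calc ∑ i ∈ d.support, (f i ^ d i).totalDegree ≤ ∑ i ∈ d.support, d i * n :=
        Finset.sum_le_sum fun i _ => (totalDegree_pow _ _).trans (Nat.mul_le_mul_left _ (hf i))
    _ = (d.sum fun _ e => e) * n := by rw [Finsupp.sum, Finset.sum_mul]
    _ ≤ p.totalDegree * n := Nat.mul_le_mul_right _ (le_totalDegree hd)

theorem eval_bind₁ (x : τ → R) (f : σ → MvPolynomial τ R) (p : MvPolynomial σ R) :
    eval x (bind₁ f p) = eval (fun i => eval x (f i)) p := by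
  rw [eval, eval₂Hom_bind₁]
  rfl

theorem eval_aeval (x : σ → R) (l : MvPolynomial σ R) (p : R[X]) :
    eval x (Polynomial.aeval l p) = p.eval (eval x l) := by
  simpa using (Polynomial.aeval_algHom_apply (aeval x) l p).symm

theorem totalDegree_aeval_le (l : MvPolynomial σ R) (p : R[X]) :
    (Polynomial.aeval l p).totalDegree ≤ p.natDegree * l.totalDegree := by
  rw [aeval_eq_sum_range]
  refine (totalDegree_finsetSum _ _).trans (Finset.sup_le fun i hi => ?_)
  refine (totalDegree_smul_le _ _).trans ((totalDegree_pow _ _).trans ?_)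
  exact Nat.mul_le_mul_right _ (Nat.lt_succ_iff.1 (Finset.mem_range.1 hi))

end MvPolynomial

theorem evalPoly_eq_sum (G : MvPolynomial (Fin 2) ℝ) (p : ℝ × ℝ) :
    evalPoly G p = ∑ d ∈ G.support, G.coeff d * p.1 ^ d 0 * p.2 ^ d 1 := by
  simp [evalPoly, MvPolynomial.eval_eq', Fin.prod_univ_two, mul_assoc]

@[fun_prop]
theorem continuous_evalPoly (G : MvPolynomial (Fin 2) ℝ) : Continuous (evalPoly G) := by
  simp_rw [funext (evalPoly_eq_sum G)]
  fun_prop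

noncomputable def linearForm (a b : ℝ) : MvPolynomial (Fin 2) ℝ :=
  MvPolynomial.C a * MvPolynomial.X 0 + MvPolynomial.C b * MvPolynomial.X 1

@[simp]
theorem evalPoly_linearForm (a b : ℝ) (p : ℝ × ℝ) :
    evalPoly (linearForm a b) p = a * p.1 + b * p.2 := by
  simp [linearForm, evalPoly]

theorem totalDegree_linearForm_le (a b : ℝ) : (linearForm a b).totalDegree ≤ 1 :=
  (MvPolynomial.totalDegree_add _ _).trans <| max_le
    ((MvPolynomial.totalDegree_mul _ _).trans (by simp [MvPolynomial.totalDegree_X]))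
    ((MvPolynomial.totalDegree_mul _ _).trans (by simp [MvPolynomial.totalDegree_X]))

noncomputable def planeRotation (θ : ℝ) : (ℝ × ℝ) ≃ₗ[ℝ] ℝ × ℝ where
  toFun p := (cos θ * p.1 - sin θ * p.2, sin θ * p.1 + cos θ * p.2)
  invFun p := (cos θ * p.1 + sin θ * p.2, cos θ * p.2 - sin θ * p.1)
  map_add' p q := by ext <;> simp <;> ring
  map_smul' c p := by ext <;> simp <;> ring
  left_inv p := by
    ext
    · linear_combination p.1 * cos_sq_add_sin_sq θ
    · linear_combination p.2 * cos_sq_add_sin_sq θ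
  right_inv p := by
    ext
    · linear_combination p.1 * cos_sq_add_sin_sq θ
    · linear_combination p.2 * cos_sq_add_sin_sq θ

@[simp]
theorem planeRotation_apply (θ : ℝ) (p : ℝ × ℝ) :
    planeRotation θ p = (cos θ * p.1 - sin θ * p.2, sin θ * p.1 + cos θ * p.2) :=
  rfl

@[fun_prop]
theorem continuous_planeRotation (θ : ℝ) : Continuous (planeRotation θ) :=
  (planeRotation θ).toContinuousLinearEquiv.continuous

noncomputable def rotatePoly (θ : ℝ) : MvPolynomial (Fin 2) ℝ →ₐ[ℝ] MvPolynomial (Fin 2) ℝ :=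
  MvPolynomial.bind₁ ![linearForm (cos θ) (-sin θ), linearForm (sin θ) (cos θ)]

theorem evalPoly_rotatePoly (θ : ℝ) (P : MvPolynomial (Fin 2) ℝ) (p : ℝ × ℝ) :
    evalPoly (rotatePoly θ P) p = evalPoly P (planeRotation θ p) := by
  rw [evalPoly, rotatePoly, MvPolynomial.eval_bind₁, evalPoly]
  refine congrArg (fun x => MvPolynomial.eval x P) (funext fun i => ?_)
  fin_cases i <;> simp [linearForm, sub_eq_add_neg]

theorem totalDegree_rotatePoly_le (θ : ℝ) (P : MvPolynomial (Fin 2) ℝ) :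
    (rotatePoly θ P).totalDegree ≤ P.totalDegree :=
  (MvPolynomial.totalDegree_bind₁_le
    (fun i => by fin_cases i <;> exact totalDegree_linearForm_le _ _) P).trans_eq (mul_one _)

theorem integral_pow_neg_self (a : ℝ) (n : ℕ) :
    ∫ v in -a..a, v ^ n = if Even n then 2 * a ^ (n + 1) / (n + 1) else 0 := by
  rw [integral_pow]
  rcases Nat.even_or_odd n with hn | hn
  · rw [if_pos hn, hn.add_one.neg_pow]
    ring
  · rw [if_neg (Nat.not_even_iff_odd.2 hn), hn.add_one.neg_pow, sub_self, zero_div]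

theorem Real.sqrt_pow_two_mul_add_one (x : ℝ) (j : ℕ) : √x ^ (2 * j + 1) = x ^ j * √x := by
  rcases le_or_gt 0 x with hx | hx
  · rw [pow_succ, pow_mul, Real.sq_sqrt hx]
  · simp [Real.sqrt_eq_zero'.2 hx.le]

/-- Integrating the monomial `u ^ a * v ^ b` over the chord `|v| ≤ √(1 - u ^ 2)` gives
`2 / (b + 1) * u ^ a * (1 - u ^ 2) ^ (b / 2) * √(1 - u ^ 2)` for even `b` and `0` for odd `b`. -/
noncomputable def chordPoly (G : MvPolynomial (Fin 2) ℝ) : ℝ[X] :=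
  ∑ d ∈ G.support, if Even (d 1) then
    C (2 / (d 1 + 1) * G.coeff d) * X ^ d 0 * (1 - X ^ 2) ^ (d 1 / 2) else 0

theorem integral_chord_eval (G : MvPolynomial (Fin 2) ℝ) (u : ℝ) :
    ∫ v in Set.Ioo (-√(1 - u ^ 2)) √(1 - u ^ 2), evalPoly G (u, v) =
      √(1 - u ^ 2) * (chordPoly G).eval u := by
  rw [← integral_Ioc_eq_integral_Ioo, ← intervalIntegral.integral_of_le
    (neg_le_self (Real.sqrt_nonneg _))]
  simp_rw [evalPoly_eq_sum]
  rw [intervalIntegral.integral_finsetSum fun _ _ =>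
    Continuous.intervalIntegrable (by fun_prop) _ _, chordPoly, eval_finsetSum, Finset.mul_sum]
  refine Finset.sum_congr rfl fun d _ => ?_
  rw [intervalIntegral.integral_const_mul, integral_pow_neg_self]
  split_ifs with hd
  · obtain ⟨j, hj⟩ := hd
    rw [hj, ← two_mul, sqrt_pow_two_mul_add_one, Nat.mul_div_cancel_left _ two_pos]
    simp only [eval_mul, eval_C, eval_pow, eval_X, eval_sub, eval_one]
    push_cast
    field_simp
  · simp

theorem natDegree_chordPoly_le (G : MvPolynomial (Fin 2) ℝ) :
    (chordPoly G).natDegree ≤ G.totalDegree := by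
  refine natDegree_sum_le_of_forall_le _ _ fun d hd => ?_
  have hd_deg : d 0 + d 1 ≤ G.totalDegree := by
    simpa [Finsupp.sum_fintype, Fin.sum_univ_two] using MvPolynomial.le_totalDegree hd
  split_ifs
  · have h_quadratic : (1 - X ^ 2 : ℝ[X]).natDegree ≤ 2 := by compute_degree!
    calc _ ≤ d 0 + d 1 / 2 * (1 - X ^ 2 : ℝ[X]).natDegree :=
          natDegree_mul_le.trans (add_le_add (natDegree_C_mul_X_pow_le _ _) natDegree_pow_le)
      _ ≤ d 0 + d 1 / 2 * 2 := by gcongr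
      _ ≤ G.totalDegree := by omega
  · simp

theorem eval_one_chordPoly (G : MvPolynomial (Fin 2) ℝ) :
    (chordPoly G).eval 1 = 2 * evalPoly G (1, 0) := by
  rw [chordPoly, evalPoly_eq_sum, eval_finsetSum, Finset.mul_sum]
  refine Finset.sum_congr rfl fun d _ => ?_
  rcases Nat.lt_or_ge (d 1) 2 with hd | hd
  · interval_cases h : d 1 <;> simp
  · have : d 1 / 2 ≠ 0 := by omega
    split_ifs <;> simp [zero_pow this, zero_pow (by omega : d 1 ≠ 0)]

theorem radon_evalPoly_eq_sqrt_mul_chordPoly (P : MvPolynomial (Fin 2) ℝ) (θ t : ℝ) :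
    radon (evalPoly P) θ t = √(1 - t ^ 2) * (chordPoly (rotatePoly θ P)).eval t := by
  rw [← integral_chord_eval]
  refine setIntegral_congr_fun measurableSet_Ioo fun s _ => ?_
  rw [evalPoly_rotatePoly, planeRotation_apply]
  congr 1
  ext <;> simp <;> ring

def unitDisk : Set (ℝ × ℝ) := {p | p.1 ^ 2 + p.2 ^ 2 ≤ 1}

@[simp]
theorem mem_unitDisk {p : ℝ × ℝ} : p ∈ unitDisk ↔ p.1 ^ 2 + p.2 ^ 2 ≤ 1 :=
  Iff.rfl

theorem isClosed_unitDisk : IsClosed unitDisk :=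
  isClosed_le (by fun_prop) (by fun_prop)

theorem measurableSet_unitDisk : MeasurableSet unitDisk :=
  isClosed_unitDisk.measurableSet

theorem isCompact_unitDisk : IsCompact unitDisk := by
  refine (isCompact_closedBall (0 : ℝ × ℝ) 1).of_isClosed_subset isClosed_unitDisk fun p hp => ?_
  rw [mem_unitDisk] at hp
  simp only [mem_closedBall_zero_iff, Prod.norm_def, Real.norm_eq_abs, max_le_iff,
    ← sq_le_one_iff_abs_le_one]
  constructor <;> nlinarith

theorem det_planeRotation (θ : ℝ) :
    LinearMap.det (planeRotation θ : (ℝ × ℝ) →ₗ[ℝ] ℝ × ℝ) = 1 := by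
  rw [← LinearMap.det_toMatrix (Module.Basis.finTwoProd ℝ), Matrix.det_fin_two]
  simp [LinearMap.toMatrix_apply]
  linear_combination cos_sq_add_sin_sq θ

theorem measurePreserving_planeRotation (θ : ℝ) :
    MeasurePreserving (planeRotation θ) volume volume := by
  refine ⟨(continuous_planeRotation θ).measurable, ?_⟩
  simpa [det_planeRotation] using Measure.map_linearMap_addHaar_eq_smul_addHaar volume
    (f := (planeRotation θ : (ℝ × ℝ) →ₗ[ℝ] ℝ × ℝ)) (by simp [det_planeRotation])

theorem measurableEmbedding_planeRotation (θ : ℝ) : MeasurableEmbedding (planeRotation θ) :=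
  (planeRotation θ).toContinuousLinearEquiv.toHomeomorph.measurableEmbedding

theorem planeRotation_preimage_unitDisk (θ : ℝ) : planeRotation θ ⁻¹' unitDisk = unitDisk := by
  ext p
  simp only [Set.mem_preimage, mem_unitDisk, planeRotation_apply]
  rw [show (cos θ * p.1 - sin θ * p.2) ^ 2 + (sin θ * p.1 + cos θ * p.2) ^ 2 = p.1 ^ 2 + p.2 ^ 2 by
    linear_combination (p.1 ^ 2 + p.2 ^ 2) * cos_sq_add_sin_sq θ]

theorem setIntegral_unitDisk_comp_planeRotation {E : Type*} [NormedAddCommGroup E]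
    [NormedSpace ℝ E] (θ : ℝ) (F : ℝ × ℝ → E) :
    ∫ p in unitDisk, F (planeRotation θ p) = ∫ p in unitDisk, F p := by
  conv_lhs => rw [← planeRotation_preimage_unitDisk θ]
  exact (measurePreserving_planeRotation θ).setIntegral_preimage_emb
    (measurableEmbedding_planeRotation θ) F _

theorem integral_indicator_unitDisk_slice {E : Type*} [NormedAddCommGroup E] [NormedSpace ℝ E]
    (F : ℝ × ℝ → E) (u : ℝ) :
    ∫ v, unitDisk.indicator F (u, v) = ∫ v in Set.Ioo (-√(1 - u ^ 2)) √(1 - u ^ 2), F (u, v) := by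
  by_cases hu : 0 ≤ 1 - u ^ 2
  · have hslice : (fun v => unitDisk.indicator F (u, v)) =
        (Set.Icc (-√(1 - u ^ 2)) √(1 - u ^ 2)).indicator (fun v => F (u, v)) := by
      ext v
      refine Set.indicator_eq_indicator ?_ rfl
      rw [Set.mem_Icc, ← Real.sq_le hu, mem_unitDisk]
      constructor <;> intro <;> linarith
    rw [hslice, MeasureTheory.integral_indicator measurableSet_Icc, integral_Icc_eq_integral_Ioo]
  · have hempty : ∀ v, (u, v) ∉ unitDisk := fun v hv => hu (by rw [mem_unitDisk] at hv; nlinarith)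
    simp [Set.indicator_of_notMem (hempty _), Real.sqrt_eq_zero'.2 (not_le.1 hu).le]

theorem integral_unitDisk_eq_integral_chord {E : Type*} [NormedAddCommGroup E] [NormedSpace ℝ E]
    {F : ℝ × ℝ → E} (hF : IntegrableOn F unitDisk) :
    ∫ p in unitDisk, F p =
      ∫ u in Set.Ioo (-1) 1, ∫ v in Set.Ioo (-√(1 - u ^ 2)) √(1 - u ^ 2), F (u, v) := by
  rw [← MeasureTheory.integral_indicator measurableSet_unitDisk, Measure.volume_eq_prod,
    integral_prod _ (by simpa [Measure.volume_eq_prod] using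
      hF.integrable_indicator measurableSet_unitDisk)]
  simp_rw [integral_indicator_unitDisk_slice]
  refine (setIntegral_eq_integral_of_forall_compl_eq_zero fun u hu => ?_).symm
  have : 1 - u ^ 2 ≤ 0 := by
    simp only [Set.mem_Ioo, not_and_or, not_lt] at hu
    rcases hu with hu | hu <;> nlinarith
  simp [Real.sqrt_eq_zero'.2 this]

theorem integral_sqrt_mul_chordPoly_mul_eq_zero {k : ℕ} {P : MvPolynomial (Fin 2) ℝ}
    (horth : ∀ Q : MvPolynomial (Fin 2) ℝ, Q.totalDegree < k →
      ∫ p in unitDisk, evalPoly P p * evalPoly Q p = 0)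
    (θ : ℝ) {p : ℝ[X]} (hp : p.natDegree < k) :
    ∫ u in -1..1, √(1 - u ^ 2) * ((chordPoly (rotatePoly θ P)).eval u * p.eval u) = 0 := by
  set Q := Polynomial.aeval (linearForm (cos θ) (sin θ)) p
  have hQ_deg : Q.totalDegree < k :=
    ((MvPolynomial.totalDegree_aeval_le _ p).trans
      ((Nat.mul_le_mul_left _ (totalDegree_linearForm_le _ _)).trans_eq (mul_one _))).trans_lt hp
  have hQ_rot : ∀ x, evalPoly Q (planeRotation θ x) = p.eval x.1 := by
    intro x
    rw [evalPoly, MvPolynomial.eval_aeval, ← evalPoly, evalPoly_linearForm, planeRotation_apply]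
    congr 1
    linear_combination x.1 * cos_sq_add_sin_sq θ
  have hcont : Continuous fun x =>
      evalPoly P (planeRotation θ x) * evalPoly Q (planeRotation θ x) := by
    fun_prop
  calc _ = ∫ u in Set.Ioo (-1) 1, ∫ v in Set.Ioo (-√(1 - u ^ 2)) √(1 - u ^ 2),
        evalPoly P (planeRotation θ (u, v)) * evalPoly Q (planeRotation θ (u, v)) := by
        rw [intervalIntegral.integral_of_le (by norm_num), integral_Ioc_eq_integral_Ioo]
        refine setIntegral_congr_fun measurableSet_Ioo fun u _ => ?_
        simp_rw [hQ_rot, integral_mul_const, ← evalPoly_rotatePoly, integral_chord_eval]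
        ring
    _ = ∫ x in unitDisk, evalPoly P (planeRotation θ x) * evalPoly Q (planeRotation θ x) :=
        (integral_unitDisk_eq_integral_chord
          (hcont.continuousOn.integrableOn_compact isCompact_unitDisk)).symm
    _ = 0 := by
        rw [setIntegral_unitDisk_comp_planeRotation θ fun x => evalPoly P x * evalPoly Q x]
        exact horth Q hQ_deg

theorem radon_orthogonal_poly_general (k : ℕ) (P : MvPolynomial (Fin 2) ℝ)
    (hdeg : P.totalDegree = k)
    (horth : ∀ Q : MvPolynomial (Fin 2) ℝ, Q.totalDegree < k →
      ∫ p in {p : ℝ × ℝ | p.1 ^ 2 + p.2 ^ 2 ≤ 1}, evalPoly P p * evalPoly Q p = 0)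
    (t : ℝ) (θ : ℝ) :
    radon (evalPoly P) θ t =
      (2 / (k + 1)) * Real.sqrt (1 - t ^ 2) * chebU k t
        * evalPoly P (Real.cos θ, Real.sin θ) := by
  obtain ⟨c, hc⟩ := Chebyshev.exists_eq_smul_U_of_integral_mul_U_eq_zero
    (hdeg ▸ (natDegree_chordPoly_le _).trans (totalDegree_rotatePoly_le θ P))
    fun m hm => integral_sqrt_mul_chordPoly_mul_eq_zero horth θ
      (by rwa [Chebyshev.natDegree_U_natCast])
  have hc_eval_one : c * (k + 1) = 2 * evalPoly P (cos θ, sin θ) := by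
    have := congrArg (eval 1) hc
    rw [eval_one_chordPoly, evalPoly_rotatePoly, eval_smul, Chebyshev.U_eval_one] at this
    simpa [eq_comm] using this
  rw [radon_evalPoly_eq_sqrt_mul_chordPoly, hc, eval_smul, smul_eq_mul, chebU]
  field_simp
  linear_combination √(1 - t ^ 2) * eval t (Chebyshev.U ℝ k) * hc_eval_one

theorem radon_orthogonal_poly (k : ℕ) (P : MvPolynomial (Fin 2) ℝ)
    (hdeg : P.totalDegree = k)
    (horth : ∀ Q : MvPolynomial (Fin 2) ℝ, Q.totalDegree < k →
      ∫ p in {p : ℝ × ℝ | p.1 ^ 2 + p.2 ^ 2 ≤ 1}, evalPoly P p * evalPoly Q p = 0)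
    (t : ℝ) (ht : t ∈ Set.Ioo (-1 : ℝ) 1) (θ : ℝ) (hθ : θ ∈ Set.Icc (0 : ℝ) (2 * π)) :
    radon (evalPoly P) θ t =
      (2 / (k + 1)) * Real.sqrt (1 - t ^ 2) * chebU k t
        * evalPoly P (Real.cos θ, Real.sin θ) :=
  radon_orthogonal_poly_general k P hdeg horth t θ
end
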